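/- Let B be a real p×q matrix with p ≥ q ≥ 1 and n ≥ 1. Then the ((n+1)p)-square matrices D ⊕ 0_{p−q} and C ⊕ (J−I)_n ⊕ ⋯ ⊕ (J−I)_n (with p − q copies of (J−I)_n) are cospectral, i.e., they have the same characteristic polynomial (after transporting along a bijection of their index types, both of cardinality (n+1)p). -/

import Mathlib

/-!
Both matrices are instances of the bordered matrix `[[0, U], [Uᵀ, (J - I)_n ⊗ I_r]]` with
`U = [A, …, A]` (`A = B` for `C`, `A = Bᵀ` for `D`). Off `x ∈ {-1, n - 1}` the block
`(x + 1)I - J` has inverse `a⁻¹ I + (a (a - n))⁻¹ J` (`a = x + 1`), whose entries sum to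
`n / (a - n)`, so a Schur complement gives
`(x + 1 - n)^m χ(x) = ((x + 1)^(n-1) (x + 1 - n))^r det(x (x + 1 - n) - n A Aᵀ)`.
Sylvester's identity `det(μ - n B Bᵀ) = μ^(p-q) det(μ - n Bᵀ B)` then yields
`χ_C / χ_D = (x / χ_{J-I}(x))^(p-q)`, which is what the extra blocks `0_{p-q}` and
`(J - I)_n^{⊕(p-q)}` compensate.
-/

open Matrix

/-- The matrix `C` of Construction III: indexed by `Fin p ⊕ (Fin n × Fin q)`,
first block row `[0, B, …, B]`, and the `n×n` grid of `q×q` blocks has zero diagonal blocks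
and identity blocks `I_q` off the diagonal. -/
def matC3 (p q n : ℕ) (B : Matrix (Fin p) (Fin q) ℝ) :
    Matrix (Fin p ⊕ Fin n × Fin q) (Fin p ⊕ Fin n × Fin q) ℝ :=
  Matrix.of fun a b =>
    match a, b with
    | Sum.inl i, Sum.inr (_, j) => B i j
    | Sum.inr (_, j), Sum.inl i => B i j
    | Sum.inr (k, j), Sum.inr (k', j') => if k ≠ k' ∧ j = j' then 1 else 0
    | _, _ => 0

/-- The matrix `D` of Construction III: indexed by `Fin q ⊕ (Fin n × Fin p)`,
first block row `[0, Bᵀ, …, Bᵀ]`, and the `n×n` grid of `p×p` blocks has zero diagonal blocks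
and identity blocks `I_p` off the diagonal. -/
def matD3 (p q n : ℕ) (B : Matrix (Fin p) (Fin q) ℝ) :
    Matrix (Fin q ⊕ Fin n × Fin p) (Fin q ⊕ Fin n × Fin p) ℝ :=
  Matrix.of fun a b =>
    match a, b with
    | Sum.inl j, Sum.inr (_, i) => B i j
    | Sum.inr (_, i), Sum.inl j => B i j
    | Sum.inr (k, i), Sum.inr (k', i') => if k ≠ k' ∧ i = i' then 1 else 0
    | _, _ => 0

open Kronecker Polynomial

namespace Matrix

variable {R : Type*} [CommRing R]

def allOnes (n : ℕ) : Matrix (Fin n) (Fin n) R := of fun _ _ => 1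

lemma allOnes_mul_allOnes (n : ℕ) : allOnes n * allOnes n = (n : R) • allOnes (R := R) n := by
  ext i j
  simp [allOnes, mul_apply]

lemma charpoly_allOnes_sub_one {n : ℕ} (hn : 1 ≤ n) :
    (allOnes n - 1 : Matrix (Fin n) (Fin n) R).charpoly =
      (X + 1) ^ (n - 1) * (X + 1 - (n : R[X])) := by
  have hJ : allOnes n = vecMulVec (1 : Fin n → R) 1 := by ext; simp [allOnes, vecMulVec_apply]
  obtain ⟨k, rfl⟩ : ∃ k, n = k + 1 := ⟨n - 1, by omega⟩
  rw [← (scalar (Fin (k + 1))).map_one, charpoly_sub_scalar, hJ, charpoly_vecMulVec]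
  simp only [Fintype.card_fin, pow_succ, one_dotProduct_one, Nat.cast_add, Nat.cast_one,
    add_tsub_cancel_right, smul_eq_C_mul, map_add, map_natCast, map_one, sub_comp, mul_comp,
    pow_comp, X_comp, add_comp, natCast_comp, one_comp, add_sub_add_right_eq_sub]
  ring

lemma det_smul_one_sub_allOnes {n : ℕ} (hn : 1 ≤ n) (a : R) :
    (a • 1 - allOnes n : Matrix (Fin n) (Fin n) R).det = a ^ (n - 1) * (a - n) := by
  have := congrArg (eval (a - 1)) (charpoly_allOnes_sub_one (R := R) hn)
  rw [eval_charpoly, scalar_apply, ← smul_one_eq_diagonal, sub_sub_eq_add_sub] at this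
  simpa [sub_smul] using this

lemma smul_one_sub_allOnes_mul_eq_one {K : Type*} [Field K] {n : ℕ} {a : K} (ha : a ≠ 0)
    (han : a - n ≠ 0) :
    (a • 1 - allOnes n) * (a⁻¹ • 1 + (a * (a - n))⁻¹ • allOnes n : Matrix (Fin n) (Fin n) K) =
      1 := by
  rw [Matrix.sub_mul, Matrix.mul_add, Matrix.mul_add]
  simp only [smul_mul_assoc, Matrix.mul_smul, Matrix.one_mul, Matrix.mul_one,
    allOnes_mul_allOnes, smul_smul]
  match_scalars <;> field_simp; ring

lemma charpoly_one_kronecker {m n : Type*} [Fintype m] [Fintype n] [DecidableEq m]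
    [DecidableEq n] (M : Matrix n n R) :
    ((1 : Matrix m m R) ⊗ₖ M).charpoly = M.charpoly ^ Fintype.card m := by
  have : charmatrix ((1 : Matrix m m R) ⊗ₖ M) = 1 ⊗ₖ charmatrix M := by
    ext ⟨i, k⟩ ⟨j, l⟩
    by_cases hij : i = j <;> by_cases hkl : k = l <;> simp [hij, hkl]
  rw [charpoly, this, det_kronecker, det_one, one_pow, one_mul, charpoly]

variable {m r : Type*} [Fintype r] [DecidableEq r]

def rowRepeat (n : ℕ) (A : Matrix m r R) : Matrix m (Fin n × r) R := of fun j ki => A j ki.2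

def replicaMatrix (n : ℕ) (A : Matrix m r R) : Matrix (m ⊕ Fin n × r) (m ⊕ Fin n × r) R :=
  fromBlocks 0 (rowRepeat n A) (rowRepeat n A)ᵀ ((allOnes n - 1) ⊗ₖ 1)

lemma rowRepeat_mul_kronecker_mul_transpose (n : ℕ) (A : Matrix m r R)
    (M : Matrix (Fin n) (Fin n) R) :
    rowRepeat n A * (M ⊗ₖ (1 : Matrix r r R)) * (rowRepeat n A)ᵀ =
      (∑ k, ∑ k', M k k') • (A * Aᵀ) := by
  ext j j'
  simp only [rowRepeat, mul_apply, of_apply, kroneckerMap_apply, one_apply, mul_ite, mul_one,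
    mul_zero, Fintype.sum_prod_type, Finset.sum_ite_eq', Finset.mem_univ, ↓reduceIte,
    transpose_apply, Finset.sum_mul, smul_apply, smul_eq_mul, Finset.mul_sum]
  rw [Finset.sum_comm]
  refine Finset.sum_congr rfl fun i _ => ?_
  rw [Finset.sum_comm]
  exact Finset.sum_congr rfl fun _ _ => Finset.sum_congr rfl fun _ _ => by ring

variable [Fintype m] [DecidableEq m]

lemma scalar_sub_replicaMatrix (n : ℕ) (A : Matrix m r R) (x : R) :
    scalar _ x - replicaMatrix n A =
      fromBlocks (scalar m x) (-rowRepeat n A) (-(rowRepeat n A)ᵀ)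
        (((x + 1) • 1 - allOnes n) ⊗ₖ (1 : Matrix r r R)) := by
  ext (i | ⟨k, i⟩) (j | ⟨k', j⟩)
  · simp [replicaMatrix, diagonal_apply]
  · simp [replicaMatrix, rowRepeat]
  · simp [replicaMatrix, rowRepeat]
  · by_cases hk : k = k' <;> by_cases hi : i = j <;>
      simp [replicaMatrix, allOnes, hk, hi]

lemma eval_charpoly_replicaMatrix {K : Type*} [Field K] {n : ℕ} (hn : 1 ≤ n) (A : Matrix m r K)
    {x : K} (ha : x + 1 ≠ 0) (han : x + 1 - n ≠ 0) :
    (x + 1 - n) ^ Fintype.card m * (replicaMatrix n A).charpoly.eval x =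
      ((x + 1) ^ (n - 1) * (x + 1 - n)) ^ Fintype.card r *
        ((n : K) • (A * Aᵀ)).charpoly.eval (x * (x + 1 - n)) := by
  set a := x + 1
  set W := (a • 1 - allOnes n) ⊗ₖ (1 : Matrix r r K)
  set V : Matrix (Fin n) (Fin n) K := a⁻¹ • 1 + (a * (a - n))⁻¹ • allOnes n
  have hW : W * (V ⊗ₖ 1) = 1 := by
    rw [← mul_kronecker_mul, smul_one_sub_allOnes_mul_eq_one ha han, Matrix.one_mul,
      one_kronecker_one]
  have := invertibleOfRightInverse _ _ hW
  have hdetW : W.det = (a ^ (n - 1) * (a - n)) ^ Fintype.card r := by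
    rw [det_kronecker, det_one, one_pow, mul_one, det_smul_one_sub_allOnes hn]
  have hsumV : ∑ k, ∑ k', V k k' = n / (a - n) := by
    simp only [V, allOnes, smul_of, add_apply, smul_apply, one_apply, smul_eq_mul, mul_ite,
      mul_one, mul_zero, of_apply, Pi.smul_apply, Finset.sum_add_distrib, Finset.sum_ite_eq,
      Finset.mem_univ, ↓reduceIte, Finset.sum_const, Finset.card_univ, Fintype.card_fin,
      nsmul_eq_mul]
    field_simp
    ring
  have hschur : scalar m x - (-rowRepeat n A) * ⅟W * (-(rowRepeat n A)ᵀ) =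
      (a - n)⁻¹ • (scalar m (x * (a - n)) - (n : K) • (A * Aᵀ)) := by
    simp only [invOf_eq_right_inv hW, Matrix.neg_mul, Matrix.mul_neg, neg_neg,
      rowRepeat_mul_kronecker_mul_transpose, hsumV]
    ext i j
    by_cases hij : i = j
    · simp only [scalar_apply, div_eq_inv_mul, hij, sub_apply, diagonal_apply_eq, smul_apply,
        smul_eq_mul]
      field_simp
    · simp [hij, div_eq_inv_mul, mul_assoc]
  rw [eval_charpoly, eval_charpoly, scalar_sub_replicaMatrix, det_fromBlocks₂₂, hdetW, hschur,
    det_smul, inv_pow, mul_left_comm, mul_inv_cancel_left₀ (pow_ne_zero _ han)]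

lemma charpoly_replicaMatrix {K : Type*} [Field K] [Infinite K] {n : ℕ} (hn : 1 ≤ n)
    (A : Matrix m r K) :
    (X + 1 - (n : K[X])) ^ Fintype.card m * (replicaMatrix n A).charpoly =
      ((X + 1) ^ (n - 1) * (X + 1 - (n : K[X]))) ^ Fintype.card r *
        ((n : K) • (A * Aᵀ)).charpoly.comp (X * (X + 1 - (n : K[X]))) := by
  apply eq_of_infinite_eval_eq
  refine Set.Infinite.mono (fun x hx => ?_)
    (Set.toFinite ({-1, (n : K) - 1} : Set K)).infinite_compl
  simp only [Set.mem_compl_iff, Set.mem_insert_iff, Set.mem_singleton_iff, not_or] at hx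
  have ha : x + 1 ≠ 0 := fun h => hx.1 (by linear_combination h)
  have han : x + 1 - n ≠ 0 := fun h => hx.2 (by linear_combination h)
  simpa using eval_charpoly_replicaMatrix hn A ha han

lemma charpoly_replicaMatrix_transpose_mul_X_pow {K : Type*} [Field K] [Infinite K] {n : ℕ}
    (hn : 1 ≤ n) (A : Matrix m r K) (hrm : Fintype.card r ≤ Fintype.card m) :
    (replicaMatrix n Aᵀ).charpoly * X ^ (Fintype.card m - Fintype.card r) =
      (replicaMatrix n A).charpoly * (allOnes n - 1 : Matrix (Fin n) (Fin n) K).charpoly ^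
        (Fintype.card m - Fintype.card r) := by
  obtain ⟨d, hd⟩ := Nat.exists_eq_add_of_le hrm
  set t : K[X] := X + 1 - (n : K[X])
  have ht : t ≠ 0 := by
    have : t = X - C ((n : K) - 1) := by
      simp only [map_sub, map_natCast, map_one, t]
      ring
    exact this ▸ X_sub_C_ne_zero _
  have hA := charpoly_replicaMatrix hn A
  have hAt := charpoly_replicaMatrix hn Aᵀ
  rw [transpose_transpose] at hAt
  have hsylvester := congrArg (·.comp (X * t))
    (charpoly_mul_comm_of_le ((n : K) • A) Aᵀ hrm)
  simp only [Matrix.smul_mul, Matrix.mul_smul, mul_comp, X_pow_comp, hd,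
    Nat.add_sub_cancel_left, mul_pow] at hsylvester
  rw [charpoly_allOnes_sub_one hn, hd, Nat.add_sub_cancel_left]
  rw [hd, pow_add] at hA hAt
  apply mul_left_cancel₀ (pow_ne_zero (Fintype.card r + d) ht)
  linear_combination (t ^ d * X ^ d) * hAt - ((X + 1) ^ (n - 1) * t) ^ d * hA
    - ((X + 1) ^ (n - 1) * t) ^ (Fintype.card r + d) * hsylvester

end Matrix

lemma matC3_eq_replicaMatrix (p q n : ℕ) (B : Matrix (Fin p) (Fin q) ℝ) :
    matC3 p q n B = replicaMatrix n B := by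
  ext (i | ⟨k, i⟩) (j | ⟨k', j⟩)
  · simp [matC3, replicaMatrix]
  · simp [matC3, replicaMatrix, rowRepeat]
  · simp [matC3, replicaMatrix, rowRepeat]
  · by_cases hk : k = k' <;> by_cases hi : i = j <;>
      simp [matC3, replicaMatrix, allOnes, one_apply, hk, hi]

lemma matD3_eq_replicaMatrix (p q n : ℕ) (B : Matrix (Fin p) (Fin q) ℝ) :
    matD3 p q n B = replicaMatrix n Bᵀ := by
  ext (i | ⟨k, i⟩) (j | ⟨k', j⟩)
  · simp [matD3, replicaMatrix]
  · simp [matD3, replicaMatrix, rowRepeat]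
  · simp [matD3, replicaMatrix, rowRepeat]
  · by_cases hk : k = k' <;> by_cases hi : i = j <;>
      simp [matD3, replicaMatrix, allOnes, one_apply, hk, hi]

theorem construction_III_cospectral_general (p q n : ℕ) (hpq : q ≤ p) (hn : 1 ≤ n)
    (B : Matrix (Fin p) (Fin q) ℝ) :
    ∃ e : ((Fin q ⊕ Fin n × Fin p) ⊕ Fin (p - q)) ≃
        ((Fin p ⊕ Fin n × Fin q) ⊕ Fin (p - q) × Fin n),
      (Matrix.fromBlocks (matD3 p q n B) 0 0
          (0 : Matrix (Fin (p - q)) (Fin (p - q)) ℝ)).charpoly =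
        ((Matrix.fromBlocks (matC3 p q n B) 0 0
            (Matrix.of fun ai a'i' : Fin (p - q) × Fin n =>
              if ai.1 = a'i'.1 ∧ ai.2 ≠ a'i'.2 then (1 : ℝ) else 0)).submatrix e
          e).charpoly := by
  obtain ⟨e⟩ : Nonempty (((Fin q ⊕ Fin n × Fin p) ⊕ Fin (p - q)) ≃
      ((Fin p ⊕ Fin n × Fin q) ⊕ Fin (p - q) × Fin n)) := by
    refine Fintype.card_eq.mp ?_
    simp only [Fintype.card_sum, Fintype.card_prod, Fintype.card_fin]
    zify [hpq]
    ring
  have hcopies : (of fun ai a'i' : Fin (p - q) × Fin n =>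
      if ai.1 = a'i'.1 ∧ ai.2 ≠ a'i'.2 then (1 : ℝ) else 0) = 1 ⊗ₖ (allOnes n - 1) := by
    ext ⟨u, i⟩ ⟨v, j⟩
    by_cases hu : u = v <;> by_cases hi : i = j <;> simp [allOnes, one_apply, hu, hi]
  refine ⟨e, ?_⟩
  rw [← e.symm_symm, ← reindex_apply, charpoly_reindex, charpoly_fromBlocks_zero₁₂,
    charpoly_fromBlocks_zero₁₂, charpoly_zero, hcopies, charpoly_one_kronecker,
    matC3_eq_replicaMatrix, matD3_eq_replicaMatrix]
  simpa using charpoly_replicaMatrix_transpose_mul_X_pow hn B (by simpa using hpq)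

/-- Construction III: the `(n+1)p`-square matrices `D ⊕ 0_{p−q}` and
`C ⊕ (J−I)_n ⊕ ⋯ ⊕ (J−I)_n` (with `p − q` copies of `(J−I)_n`) are cospectral. Here the
`p − q` copies of `(J−I)_n` form a block-diagonal matrix indexed by `Fin (p−q) × Fin n`. -/
theorem construction_III_cospectral (p q n : ℕ) (hq : 1 ≤ q) (hpq : q ≤ p) (hn : 1 ≤ n)
    (B : Matrix (Fin p) (Fin q) ℝ) :
    ∃ e : ((Fin q ⊕ Fin n × Fin p) ⊕ Fin (p - q)) ≃
        ((Fin p ⊕ Fin n × Fin q) ⊕ Fin (p - q) × Fin n),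
      (Matrix.fromBlocks (matD3 p q n B) 0 0
          (0 : Matrix (Fin (p - q)) (Fin (p - q)) ℝ)).charpoly =
        ((Matrix.fromBlocks (matC3 p q n B) 0 0
            (Matrix.of fun ai a'i' : Fin (p - q) × Fin n =>
              if ai.1 = a'i'.1 ∧ ai.2 ≠ a'i'.2 then (1 : ℝ) else 0)).submatrix e
          e).charpoly :=
  construction_III_cospectral_general p q n hpq hn B
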